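/- Let r ≥ 3, A ∈ 𝒯_r, and let e_0 ∈ E(A) be an edge of alpha-type. Then there exists a point q ∈ U_A ∩ U_{α_{e_0}A} ∩ X_r(ℝ) whose order is the same as the order of A. -/

import Mathlib

/-!
Give every edge `e` a positive real ratio `ζ_e` and place the leaves on the real line so that the
root has `x = 1` and `x_{d(e)} = ζ_e x_{u(e)}`. If all ratios are below `1/16` except one, which is
below `3/4`, a geometric-series bound shows that at every vertex `|x_v|` exceeds the sum of the
`|x_u|` over the vertices strictly below it. This separates the leaves in the order of the tree, and
the same estimate over the whole polydisc shows that these radii are admissible. With `ζ = 2/3` at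
the right child of `d(e₀)` and `1/64` elsewhere, the resulting point has, in the chart of
`α_{e₀}A`, the ratio `1/2` at the new left child of `d(e₀)` and ratios at most `3/64` elsewhere, so
it lies in both `U_A` and `U_{α_{e₀}A}`.
-/

noncomputable section

/-- A plane (rooted) binary tree with leaves labeled by elements of `Fin r`. -/
inductive PTree (r : ℕ) : Type
  | leaf : Fin r → PTree r
  | node : PTree r → PTree r → PTree r

namespace PTree

variable {r : ℕ}

/-- The labels of the leaves of the tree, listed from left to right. -/
def leafLabels : PTree r → List (Fin r)
  | .leaf i => [i]
  | .node l t => l.leafLabels ++ t.leafLabels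

/-- `A ∈ 𝒯_r`: the `r` leaves of `A` are labeled bijectively by `Fin r`. -/
def IsTree (A : PTree r) : Prop :=
  A.leafLabels.Nodup ∧ A.leafLabels.length = r

/-- The label of the rightmost leaf of the tree. -/
def rightmost : PTree r → Fin r
  | .leaf i => i
  | .node _ t => t.rightmost

/-- The subtree of a tree at the address `p` (`false` = go to the left child,
`true` = go to the right child), if the address is valid. -/
def subtreeAt : PTree r → List Bool → Option (PTree r)
  | t, [] => some t
  | .leaf _, _ :: _ => none
  | .node l t, b :: p => (if b then t else l).subtreeAt p

/-- `p` is the address of an internal (non-leaf) vertex of `A`; the set of such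
addresses is `V(A)`. -/
def IsVertex (A : PTree r) (p : List Bool) : Prop :=
  ∃ l t : PTree r, A.subtreeAt p = some (.node l t)

/-- `p` is the address of the lower endpoint `d(e)` of an internal edge `e` of
`A` (an edge not adjacent to a leaf); the upper endpoint `u(e)` is at the
address `p.dropLast`.  The set of such addresses is `E(A)`. -/
def IsEdge (A : PTree r) (p : List Bool) : Prop :=
  p ≠ [] ∧ A.IsVertex p

/-- The type `E(A)` of internal edges of `A`. -/
abbrev Edge (A : PTree r) : Type := {p : List Bool // A.IsEdge p}

/-- `x_v = z_{L(v)} − z_{R(v)}` for the internal vertex `v` given as the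
subtree rooted at it (junk value `0` at leaves). -/
def xval (z : Fin r → ℂ) : PTree r → ℂ
  | .leaf _ => 0
  | .node l t => z l.rightmost - z t.rightmost

/-- The coordinate `x_v` for the vertex `v` of `A` with address `p`. -/
def xAt (A : PTree r) (z : Fin r → ℂ) (p : List Bool) : ℂ :=
  match A.subtreeAt p with
  | some t => xval z t
  | none => 0

/-- The coordinate `ζ_e = x_{d(e)} / x_{u(e)}` for the edge of `A` whose lower
endpoint has address `p` (its upper endpoint has address `p.dropLast`). -/
def zetaAt (A : PTree r) (z : Fin r → ℂ) (p : List Bool) : ℂ :=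
  xAt A z p / xAt A z p.dropLast

/-- `Leaf(e)`: the labels of the leaves descending from the vertex of `A` with
address `p`. -/
def leavesAt (A : PTree r) (p : List Bool) : List (Fin r) :=
  ((A.subtreeAt p).map leafLabels).getD []

/-- The label of the rightmost leaf descending from the vertex of `A` with
address `p`. -/
def rightmostAt (A : PTree r) (p : List Bool) : Option (Fin r) :=
  (A.subtreeAt p).map rightmost

end PTree

/-- The configuration space `X_r = {(z_1,…,z_r) ∈ ℂ^r : z_i ≠ z_j for i ≠ j}`. -/
def ConfigSpace (r : ℕ) : Set (Fin r → ℂ) :=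
  {z | ∀ i j : Fin r, i ≠ j → z i ≠ z j}

namespace PTree

variable {r : ℕ}

/-- The `A`-coordinate map `Ψ_A = (z_A, x_A, (ζ_e)_{e ∈ E(A)})`, where
`z_A = z_{r_A}` (`r_A` the rightmost leaf of `A`) and `x_A = x_{t_A}` (`t_A`
the root of `A`). -/
def psi (A : PTree r) (z : Fin r → ℂ) : ℂ × ℂ × (A.Edge → ℂ) :=
  (z A.rightmost, xval z A, fun e => A.zetaAt z e.1)

/-- The variable index type for the polynomial ring
`ℂ[z_A, x_A, ζ_e (e ∈ E(A))]`. -/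
abbrev Idx (A : PTree r) : Type := Unit ⊕ Unit ⊕ A.Edge

/-- The point of `ℂ^{Idx A}` corresponding to `w = (z_A, x_A, (ζ_e)_e)`. -/
def assign (A : PTree r) (w : ℂ × ℂ × (A.Edge → ℂ)) : A.Idx → ℂ :=
  Sum.elim (fun _ => w.1) (Sum.elim (fun _ => w.2.1) fun e => w.2.2 e)

/-- The polynomial map `Φ_A : ℂ × ℂ × ℂ^{E(A)} → ℂ^r` determined by a family
of polynomials `P`. -/
def phiMap (A : PTree r) (P : Fin r → MvPolynomial A.Idx ℂ)
    (w : ℂ × ℂ × (A.Edge → ℂ)) : Fin r → ℂ :=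
  fun i => MvPolynomial.eval (A.assign w) (P i)

/-- `Φ_A ∘ Ψ_A = id` on `X_r`. -/
def PhiPsiId (A : PTree r) (P : Fin r → MvPolynomial A.Idx ℂ) : Prop :=
  ∀ z ∈ ConfigSpace r, A.phiMap P (A.psi z) = z

/-- `Ψ_A ∘ Φ_A = id` on `ℂ × ℂ^× × (ℂ^×)^{E(A)}`. -/
def PsiPhiId (A : PTree r) (P : Fin r → MvPolynomial A.Idx ℂ) : Prop :=
  ∀ w : ℂ × ℂ × (A.Edge → ℂ), w.2.1 ≠ 0 → (∀ e, w.2.2 e ≠ 0) →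
    A.psi (A.phiMap P w) = w

end PTree

/-- The cut plane `ℂ^cut = ℂ ∖ ℝ_{≤0}`. -/
def cutPlane : Set ℂ := {w : ℂ | 0 < w.re ∨ w.im ≠ 0}

namespace PTree

variable {r : ℕ}

/-- The region `ℂ × ℂ^cut × ∏_{e ∈ E(A)} 𝔻_{p_e}^cut` in `ℂ × ℂ × ℂ^{E(A)}`. -/
def cutRegion (A : PTree r) (p : A.Edge → ℝ) : Set (ℂ × ℂ × (A.Edge → ℂ)) :=
  {w | w.2.1 ∈ cutPlane ∧ ∀ e, w.2.2 e ∈ cutPlane ∧ ‖w.2.2 e‖ < p e}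

/-- The tuple `p = (p_e)_{e∈E(A)}` is `A`-admissible:
`Φ_A(ℂ × ℂ^× × ∏_e 𝔻_{p_e}^×) ⊆ X_r`. -/
def Admissible (A : PTree r) (P : Fin r → MvPolynomial A.Idx ℂ)
    (p : A.Edge → ℝ) : Prop :=
  ∀ w : ℂ × ℂ × (A.Edge → ℂ), w.2.1 ≠ 0 →
    (∀ e, w.2.2 e ≠ 0 ∧ ‖w.2.2 e‖ < p e) →
      A.phiMap P w ∈ ConfigSpace r

/-- `U_A^𝔭 = Φ_A(ℂ × ℂ^cut × ∏_e 𝔻_{p_e}^cut)`. -/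
def UAp (A : PTree r) (P : Fin r → MvPolynomial A.Idx ℂ) (p : A.Edge → ℝ) :
    Set (Fin r → ℂ) :=
  A.phiMap P '' A.cutRegion p

/-- `U_A = ⋃ U_A^𝔭`, the union over all `A`-admissible tuples of positive
reals `𝔭`. -/
def UA (A : PTree r) (P : Fin r → MvPolynomial A.Idx ℂ) : Set (Fin r → ℂ) :=
  ⋃ (p : A.Edge → ℝ) (_ : (∀ e, 0 < p e) ∧ A.Admissible P p), A.UAp P p

end PTree

namespace PTree

variable {r : ℕ}

/-- Replace the subtree of a tree at the address `p` by `s` (returning the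
tree unchanged below an invalid address). -/
def replaceAt : PTree r → List Bool → PTree r → PTree r
  | _, [], s => s
  | .leaf i, _ :: _, _ => .leaf i
  | .node l t, b :: p, s =>
      if b then .node l (t.replaceAt p s) else .node (l.replaceAt p s) t

end PTree

/-- A point `q ∈ X_r(ℝ)` has the same order as `A`: for all `i ≠ j` one has
`q_i < q_j` exactly when leaf `i` lies to the right of leaf `j` in the planar
embedding of `A` (i.e. `i` occurs later than `j` in the left-to-right list of
leaf labels of `A`). -/
def SameOrder {r : ℕ} (A : PTree r) (q : Fin r → ℂ) : Prop :=
  ∀ i j : Fin r, i ≠ j →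
    ((q i).re < (q j).re ↔ A.leafLabels.idxOf j < A.leafLabels.idxOf i)

namespace PTree

variable {r : ℕ}

theorem subtreeAt_nil (t : PTree r) : t.subtreeAt [] = some t := by
  cases t <;> rfl

theorem subtreeAt_append (t : PTree r) (a b : List Bool) :
    t.subtreeAt (a ++ b) = (t.subtreeAt a).bind (·.subtreeAt b) := by
  induction a generalizing t with
  | nil => simp [subtreeAt_nil]
  | cons x a ih => cases t <;> simp [subtreeAt, ih]

theorem subtreeAt_append_singleton {t l s : PTree r} {m : List Bool}
    (h : t.subtreeAt m = some (node l s)) (b : Bool) :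
    t.subtreeAt (m ++ [b]) = some (if b then s else l) := by
  rw [subtreeAt_append, h]
  cases b <;> rfl

theorem IsVertex.of_append {t : PTree r} {a b : List Bool} (h : t.IsVertex (a ++ b)) :
    t.IsVertex a := by
  obtain ⟨l, s, h⟩ := h
  rw [subtreeAt_append] at h
  rcases ha : t.subtreeAt a with _ | _ | ⟨l', s'⟩
  · simp [ha] at h
  · cases b <;> simp [ha, subtreeAt] at h
  · exact ⟨l', s', ha⟩

theorem IsEdge.isVertex_dropLast {t : PTree r} {m : List Bool} (h : t.IsEdge m) :
    t.IsVertex m.dropLast :=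
  IsVertex.of_append (b := [m.getLast h.1]) (by rw [List.dropLast_append_getLast]; exact h.2)

theorem isVertex_nil_replaceAt {t : PTree r} (ht : t.IsVertex []) {m : List Bool} (hm : m ≠ [])
    (s : PTree r) : (t.replaceAt m s).IsVertex [] := by
  obtain ⟨l, s', h⟩ := ht
  obtain rfl : t = node l s' := by simpa [subtreeAt_nil] using h
  obtain ⟨b, m, rfl⟩ := List.exists_cons_of_ne_nil hm
  cases b <;> exact ⟨_, _, rfl⟩

theorem rightmost_mem_leafLabels (t : PTree r) : t.rightmost ∈ t.leafLabels := by
  induction t with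
  | leaf i => simp [rightmost, leafLabels]
  | node l s _ ihs => simp [rightmost, leafLabels, ihs]

theorem leafLabels_sublist_of_subtreeAt {t u : PTree r} {m : List Bool}
    (h : t.subtreeAt m = some u) : u.leafLabels.Sublist t.leafLabels := by
  induction m generalizing t with
  | nil => cases t <;> simp_all [subtreeAt]
  | cons b m ih =>
    cases t with
    | leaf _ => simp [subtreeAt] at h
    | node l s =>
      cases b
      · exact (ih h).trans (List.sublist_append_left _ _)
      · exact (ih h).trans (List.sublist_append_right _ _)

theorem nodup_leafLabels_node {l s : PTree r} (h : (node l s).leafLabels.Nodup) :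
    l.leafLabels.Nodup ∧ s.leafLabels.Nodup ∧ l.leafLabels.Disjoint s.leafLabels := by
  simpa [leafLabels, List.nodup_append'] using h

theorem IsTree.mem_leafLabels {T : PTree r} (hT : T.IsTree) (i : Fin r) :
    i ∈ T.leafLabels := by
  have : T.leafLabels.toFinset = Finset.univ :=
    Finset.eq_univ_of_card _ (by rw [List.toFinset_card_of_nodup hT.1, hT.2, Fintype.card_fin])
  simp [← List.mem_toFinset, this]

theorem leafLabels_replaceAt {t u s : PTree r} {m : List Bool} (h : t.subtreeAt m = some u)
    (hs : s.leafLabels = u.leafLabels) : (t.replaceAt m s).leafLabels = t.leafLabels := by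
  induction m generalizing t with
  | nil => cases t <;> simp_all [subtreeAt, replaceAt]
  | cons b m ih =>
    cases t with
    | leaf _ => simp [subtreeAt] at h
    | node l s' => cases b <;> simp_all [subtreeAt, replaceAt, leafLabels]

theorem rel_of_idxOf_lt (R : Fin r → Fin r → Prop) {t : PTree r} (hnd : t.leafLabels.Nodup)
    (h : ∀ m l s, t.subtreeAt m = some (node l s) →
      ∀ i ∈ l.leafLabels, ∀ j ∈ s.leafLabels, R i j)
    {i j : Fin r} (hi : i ∈ t.leafLabels) (hj : j ∈ t.leafLabels)
    (hij : t.leafLabels.idxOf i < t.leafLabels.idxOf j) : R i j := by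
  induction t with
  | leaf k =>
    simp only [leafLabels, List.mem_singleton] at hi hj
    subst hi hj
    exact absurd hij (lt_irrefl _)
  | node l s ihl ihs =>
    obtain ⟨hndl, hnds, hdisj⟩ := nodup_leafLabels_node hnd
    simp only [leafLabels, List.mem_append] at hi hj hij
    rcases hi with hi | hi <;> rcases hj with hj | hj
    · rw [List.idxOf_append_of_mem hi, List.idxOf_append_of_mem hj] at hij
      exact ihl hndl (fun m => h (false :: m)) hi hj hij
    · exact h [] l s rfl i hi j hj
    · rw [List.idxOf_append_of_notMem (hdisj · hi), List.idxOf_append_of_mem hj] at hij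
      have := List.idxOf_lt_length_iff.2 hj
      omega
    · rw [List.idxOf_append_of_notMem (hdisj · hi), List.idxOf_append_of_notMem (hdisj · hj)]
        at hij
      exact ihs hnds (fun m => h (true :: m)) hi hj (by omega)

def normSum (z : Fin r → ℂ) : PTree r → ℝ
  | leaf _ => 0
  | node l s => ‖xval z (node l s)‖ + normSum z l + normSum z s

theorem normSum_nonneg (z : Fin r → ℂ) (t : PTree r) : 0 ≤ normSum z t := by
  induction t with
  | leaf _ => exact le_rfl
  | node l s ihl ihs => simp only [normSum]; positivity

theorem norm_sub_rightmost_le (z : Fin r → ℂ) {i : Fin r} {t : PTree r}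
    (hi : i ∈ t.leafLabels) : ‖z i - z t.rightmost‖ ≤ normSum z t := by
  induction t with
  | leaf j => simp_all [leafLabels, normSum, rightmost]
  | node l s ihl ihs =>
    have := normSum_nonneg z l
    have := normSum_nonneg z s
    by_cases his : i ∈ s.leafLabels
    · simp only [normSum, rightmost]
      linarith [ihs his, norm_nonneg (xval z (node l s))]
    · have hil : i ∈ l.leafLabels := by simp_all [leafLabels]
      have hsplit : z i - z (node l s).rightmost = (z i - z l.rightmost) + xval z (node l s) := by
        simp only [xval, rightmost]; ring
      simp only [normSum, hsplit]
      linarith [norm_add_le (z i - z l.rightmost) (xval z (node l s)), ihl hil]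

theorem norm_sub_sub_xval_le (z : Fin r → ℂ) {l s : PTree r} {i j : Fin r}
    (hi : i ∈ l.leafLabels) (hj : j ∈ s.leafLabels) :
    ‖z i - z j - xval z (node l s)‖ ≤ normSum z l + normSum z s := by
  have : z i - z j - xval z (node l s) = (z i - z l.rightmost) - (z j - z s.rightmost) := by
    simp only [xval]; ring
  rw [this]
  linarith [norm_sub_le (z i - z l.rightmost) (z j - z s.rightmost),
    norm_sub_rightmost_le z hi, norm_sub_rightmost_le z hj]

theorem mem_configSpace_of_normSum_lt {T : PTree r} (hT : T.IsTree) {z : Fin r → ℂ}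
    (hsep : ∀ m l s, T.subtreeAt m = some (node l s) →
      normSum z l + normSum z s < ‖xval z (node l s)‖) :
    z ∈ ConfigSpace r := by
  have key : ∀ i j, T.leafLabels.idxOf i < T.leafLabels.idxOf j → z i ≠ z j := by
    refine fun i j => rel_of_idxOf_lt (fun i j => z i ≠ z j) hT.1 ?_
      (hT.mem_leafLabels i) (hT.mem_leafLabels j)
    intro m l s h i hi j hj hij
    have := norm_sub_sub_xval_le z hi hj
    rw [hij, sub_self, zero_sub, norm_neg] at this
    linarith [hsep m l s h]
  intro i j hij
  rcases lt_trichotomy (T.leafLabels.idxOf i) (T.leafLabels.idxOf j) with h | h | h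
  · exact key i j h
  · exact absurd ((List.idxOf_inj (hT.mem_leafLabels i)).1 h) hij
  · exact (key j i h).symm

theorem sameOrder_of_normSum_lt_re {T : PTree r} (hT : T.IsTree) {z : Fin r → ℂ}
    (hsep : ∀ m l s, T.subtreeAt m = some (node l s) →
      normSum z l + normSum z s < (xval z (node l s)).re) :
    SameOrder T z := by
  have key : ∀ i j, T.leafLabels.idxOf i < T.leafLabels.idxOf j → (z j).re < (z i).re := by
    refine fun i j => rel_of_idxOf_lt (fun i j => (z j).re < (z i).re) hT.1 ?_
      (hT.mem_leafLabels i) (hT.mem_leafLabels j)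
    intro m l s h i hi j hj
    have h1 := norm_sub_sub_xval_le z hi hj
    have h2 := Complex.abs_re_le_norm (z i - z j - xval z (node l s))
    simp only [Complex.sub_re] at h2
    linarith [abs_le.1 h2, hsep m l s h]
  intro i j hij
  refine ⟨fun h => ?_, key j i⟩
  rcases lt_trichotomy (T.leafLabels.idxOf j) (T.leafLabels.idxOf i) with h' | h' | h'
  · exact h'
  · exact absurd ((List.idxOf_inj (hT.mem_leafLabels j)).1 h') hij.symm
  · exact absurd (key i j h') (not_lt.2 h.le)

def radius (g m : List Bool) : ℝ := if m = g then 3/4 else 1/16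

/-- `8/7 = 1/(1 - 2·(1/16))` bounds the geometric series below a vertex all of whose descending
edges have radius `1/16`; above the special edge `g` the factor `27/14 = 1 + (3/4 + 1/16)·8/7` is
needed. -/
def sumFactor (g m : List Bool) : ℝ := if m <+: g ∧ m ≠ g then 27/14 else 8/7

theorem radius_nonneg (g m : List Bool) : 0 ≤ radius g m := by
  unfold radius; split_ifs <;> norm_num

theorem sumFactor_nonneg (g m : List Bool) : 0 ≤ sumFactor g m := by
  unfold sumFactor; split_ifs <;> norm_num

theorem radius_mul_sumFactor_le (g c : List Bool) : radius g c * sumFactor g c ≤ 6/7 := by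
  unfold radius sumFactor
  split_ifs with h₁ h₂ <;> first | exact absurd h₁ h₂.2 | norm_num

theorem radius_mul_sumFactor_of_not_prefix {g c : List Bool} (h : ¬ c <+: g) :
    radius g c * sumFactor g c = 1/14 := by
  have hc : c ≠ g := by rintro rfl; exact h (List.prefix_refl c)
  rw [radius, sumFactor, if_neg hc, if_neg fun h' => h h'.1]
  norm_num

theorem one_add_radius_mul_sumFactor_le (g m : List Bool) :
    1 + radius g (m ++ [false]) * sumFactor g (m ++ [false])
      + radius g (m ++ [true]) * sumFactor g (m ++ [true]) ≤ sumFactor g m := by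
  by_cases hm : m <+: g ∧ m ≠ g
  · have : ¬ m ++ [false] <+: g ∨ ¬ m ++ [true] <+: g := by
      by_contra! h
      simpa using List.prefix_of_prefix_length_le h.1 h.2 (by simp)
    rw [show sumFactor g m = 27/14 from if_pos hm]
    rcases this with h | h
    · linarith [radius_mul_sumFactor_of_not_prefix h, radius_mul_sumFactor_le g (m ++ [true])]
    · linarith [radius_mul_sumFactor_of_not_prefix h, radius_mul_sumFactor_le g (m ++ [false])]
  · have hc : ∀ b, ¬ m ++ [b] <+: g := fun b hb =>
      hm ⟨(List.prefix_append _ _).trans hb, by rintro rfl; simpa using hb.length_le⟩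
    rw [show sumFactor g m = 8/7 from if_neg hm, radius_mul_sumFactor_of_not_prefix (hc _),
      radius_mul_sumFactor_of_not_prefix (hc _)]
    norm_num

section Estimate

variable {T : PTree r} {z : Fin r → ℂ} {g : List Bool}

theorem xAt_of_subtreeAt {m : List Bool} {t : PTree r} (h : T.subtreeAt m = some t) :
    T.xAt z m = xval z t := by
  simp [xAt, h]

theorem normSum_le_sumFactor_mul
    (hratio : ∀ m, T.IsEdge m → ‖T.xAt z m‖ ≤ radius g m * ‖T.xAt z m.dropLast‖)
    {t : PTree r} {m : List Bool} (h : T.subtreeAt m = some t) :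
    normSum z t ≤ sumFactor g m * ‖T.xAt z m‖ := by
  induction t generalizing m with
  | leaf _ =>
    simp only [normSum]
    exact mul_nonneg (sumFactor_nonneg g m) (norm_nonneg _)
  | node l s ihl ihs =>
    have hchild : ∀ b, ‖T.xAt z (m ++ [b])‖ ≤ radius g (m ++ [b]) * ‖T.xAt z m‖ := by
      intro b
      have hb := subtreeAt_append_singleton h b
      rcases hc : (if b then s else l) with _ | ⟨l', s'⟩ <;> rw [hc] at hb
      · rw [xAt_of_subtreeAt hb, xval, norm_zero]
        exact mul_nonneg (radius_nonneg g _) (norm_nonneg _)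
      · simpa using hratio _ ⟨by simp, l', s', hb⟩
    have hl := (ihl (subtreeAt_append_singleton h false)).trans
      (mul_le_mul_of_nonneg_left (hchild false) (sumFactor_nonneg g _))
    have hs := (ihs (subtreeAt_append_singleton h true)).trans
      (mul_le_mul_of_nonneg_left (hchild true) (sumFactor_nonneg g _))
    have hsum := mul_le_mul_of_nonneg_right (one_add_radius_mul_sumFactor_le g m)
      (norm_nonneg (T.xAt z m))
    rw [normSum, ← xAt_of_subtreeAt h]
    linarith

theorem normSum_add_lt_norm_xval
    (hratio : ∀ m, T.IsEdge m → ‖T.xAt z m‖ ≤ radius g m * ‖T.xAt z m.dropLast‖)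
    {m : List Bool} {l s : PTree r} (h : T.subtreeAt m = some (node l s))
    (hx : T.xAt z m ≠ 0) :
    normSum z l + normSum z s < ‖xval z (node l s)‖ := by
  have hle := normSum_le_sumFactor_mul hratio h
  have hK : sumFactor g m < 2 := by unfold sumFactor; split_ifs <;> norm_num
  rw [xAt_of_subtreeAt h] at hle hx
  have := norm_pos_iff.2 hx
  rw [normSum] at hle
  nlinarith

end Estimate

section Charts

variable {T : PTree r} {P : Fin r → MvPolynomial T.Idx ℂ}

theorem admissible_radius (hT : T.IsTree) (hPsiPhi : T.PsiPhiId P) (g : List Bool) :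
    T.Admissible P (fun e => radius g e.1) := by
  intro w hw hζ
  have hψ := hPsiPhi w hw (fun e => (hζ e).1)
  set z := T.phiMap P w
  have hzeta : ∀ e : T.Edge, T.zetaAt z e.1 = w.2.2 e := fun e => congrFun (congrArg (·.2.2) hψ) e
  have hx : ∀ m (hm : T.IsEdge m), T.xAt z m ≠ 0 ∧ T.xAt z m.dropLast ≠ 0 := fun m hm =>
    div_ne_zero_iff.1 (by rw [← zetaAt, hzeta ⟨m, hm⟩]; exact (hζ _).1)
  have hratio : ∀ m, T.IsEdge m → ‖T.xAt z m‖ ≤ radius g m * ‖T.xAt z m.dropLast‖ := by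
    intro m hm
    have h := hzeta ⟨m, hm⟩
    rw [zetaAt, div_eq_iff (hx m hm).2] at h
    rw [h, norm_mul]
    exact mul_le_mul_of_nonneg_right (hζ ⟨m, hm⟩).2.le (norm_nonneg _)
  refine mem_configSpace_of_normSum_lt hT fun m l s h => normSum_add_lt_norm_xval hratio h ?_
  by_cases hm : m = []
  · subst hm
    rwa [xAt_of_subtreeAt (subtreeAt_nil T), show xval z T = w.2.1 from congrArg (·.2.1) hψ]
  · exact (hx m ⟨hm, l, s, h⟩).1

theorem mem_UA_of_psi_mem_cutRegion (hPhiPsi : T.PhiPsiId P) {p : T.Edge → ℝ}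
    (hp : ∀ e, 0 < p e) (hadm : T.Admissible P p) {z : Fin r → ℂ} (hz : z ∈ ConfigSpace r)
    (hψ : T.psi z ∈ T.cutRegion p) : z ∈ T.UA P :=
  Set.mem_iUnion₂.2 ⟨p, ⟨hp, hadm⟩, T.psi z, hψ, hPhiPsi z hz⟩

end Charts

def pathProd (f : List Bool → ℝ) : List Bool → List Bool → ℝ
  | _, [] => 1
  | p, b :: m => f (p ++ [b]) * pathProd f (p ++ [b]) m

theorem pathProd_append_singleton (f : List Bool → ℝ) (m p : List Bool) (b : Bool) :
    pathProd f p (m ++ [b]) = pathProd f p m * f (p ++ m ++ [b]) := by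
  induction m generalizing p with
  | nil => simp [pathProd]
  | cons c m ih => simp [pathProd, ih, mul_assoc]

theorem pathProd_pos {f : List Bool → ℝ} (hf : ∀ u, 0 < f u) (m p : List Bool) :
    0 < pathProd f p m := by
  induction m generalizing p with
  | nil => exact one_pos
  | cons c m ih => exact mul_pos (hf _) (ih _)

/-- Real positions of the leaves of a subtree `t` placed at the address `p` of an ambient tree,
with `x`-coordinate `X` at the root of `t`, its rightmost leaf at `ρ`, and `ζ_e = f e` at every
edge `e` of `t` (addresses are absolute). -/
def leafPos (f : List Bool → ℝ) : PTree r → List Bool → ℝ → ℝ → Fin r → ℝ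
  | leaf j, _, _, ρ => fun i => if i = j then ρ else 0
  | node l s, p, X, ρ => fun i =>
      if i ∈ l.leafLabels then leafPos f l (p ++ [false]) (f (p ++ [false]) * X) (ρ + X) i
      else leafPos f s (p ++ [true]) (f (p ++ [true]) * X) ρ i

theorem leafPos_node (f : List Bool → ℝ) (l s : PTree r) (p : List Bool) (X ρ : ℝ) (i : Fin r) :
    leafPos f (node l s) p X ρ i =
      if i ∈ l.leafLabels then leafPos f l (p ++ [false]) (f (p ++ [false]) * X) (ρ + X) i
      else leafPos f s (p ++ [true]) (f (p ++ [true]) * X) ρ i := rfl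

theorem leafPos_rightmost (f : List Bool → ℝ) {t : PTree r} (hnd : t.leafLabels.Nodup)
    (p : List Bool) (X ρ : ℝ) : leafPos f t p X ρ t.rightmost = ρ := by
  induction t generalizing p X ρ with
  | leaf j => simp [leafPos, rightmost]
  | node l s _ ihs =>
    obtain ⟨-, hnds, hdisj⟩ := nodup_leafLabels_node hnd
    rw [rightmost, leafPos_node, if_neg fun h => hdisj h (rightmost_mem_leafLabels s)]
    exact ihs hnds _ _ _

theorem leafPos_sub_leafPos (f : List Bool → ℝ) {t : PTree r} (hnd : t.leafLabels.Nodup)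
    {m : List Bool} {l' s' : PTree r} (h : t.subtreeAt m = some (node l' s'))
    (p : List Bool) (X ρ : ℝ) :
    leafPos f t p X ρ l'.rightmost - leafPos f t p X ρ s'.rightmost = X * pathProd f p m := by
  induction t generalizing m p X ρ with
  | leaf j => cases m <;> simp [subtreeAt] at h
  | node l s ihl ihs =>
    obtain ⟨hndl, hnds, hdisj⟩ := nodup_leafLabels_node hnd
    have hmem : ∀ {u : PTree r}, (node l' s').leafLabels.Sublist u.leafLabels →
        l'.rightmost ∈ u.leafLabels ∧ s'.rightmost ∈ u.leafLabels := fun hsub =>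
      ⟨hsub.subset (by simp [leafLabels, rightmost_mem_leafLabels]),
        hsub.subset (by simp [leafLabels, rightmost_mem_leafLabels])⟩
    rcases m with _ | ⟨_ | _, m⟩
    · obtain ⟨rfl, rfl⟩ : l = l' ∧ s = s' := by simpa [subtreeAt] using h
      rw [leafPos_node, leafPos_node, if_pos (rightmost_mem_leafLabels l),
        if_neg fun h => hdisj h (rightmost_mem_leafLabels s), leafPos_rightmost f hndl,
        leafPos_rightmost f hnds]
      simp [pathProd]
    · obtain ⟨h1, h2⟩ := hmem (leafLabels_sublist_of_subtreeAt (t := l) h)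
      rw [leafPos_node, leafPos_node, if_pos h1, if_pos h2, ihl hndl h, pathProd]
      ring
    · obtain ⟨h1, h2⟩ := hmem (leafLabels_sublist_of_subtreeAt (t := s) h)
      rw [leafPos_node, leafPos_node, if_neg (hdisj · h1), if_neg (hdisj · h2), ihs hnds h,
        pathProd]
      ring

section RealPoint

variable {T : PTree r} {f : List Bool → ℝ}

theorem xAt_leafPos (hnd : T.leafLabels.Nodup) {m : List Bool} (hm : T.IsVertex m) :
    T.xAt (fun i => (leafPos f T [] 1 0 i : ℂ)) m = pathProd f [] m := by
  obtain ⟨l, s, h⟩ := hm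
  rw [xAt_of_subtreeAt h, xval, ← Complex.ofReal_sub, leafPos_sub_leafPos f hnd h, one_mul]

theorem xAt_leafPos_eq_mul (hnd : T.leafLabels.Nodup) {m : List Bool} (hm : T.IsEdge m) :
    T.xAt (fun i => (leafPos f T [] 1 0 i : ℂ)) m
      = f m * T.xAt (fun i => (leafPos f T [] 1 0 i : ℂ)) m.dropLast := by
  have hsplit := List.dropLast_append_getLast hm.1
  rw [xAt_leafPos hnd hm.isVertex_dropLast, xAt_leafPos hnd hm.2]
  conv_lhs => rw [← hsplit, pathProd_append_singleton, List.nil_append, hsplit]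
  push_cast
  ring

theorem zetaAt_leafPos (hnd : T.leafLabels.Nodup) (hpos : ∀ u, 0 < f u) {m : List Bool}
    (hm : T.IsEdge m) : T.zetaAt (fun i => (leafPos f T [] 1 0 i : ℂ)) m = f m := by
  have hden : T.xAt (fun i => (leafPos f T [] 1 0 i : ℂ)) m.dropLast ≠ 0 := by
    rw [xAt_leafPos hnd hm.isVertex_dropLast]
    exact_mod_cast (pathProd_pos hpos _ _).ne'
  rw [zetaAt, xAt_leafPos_eq_mul hnd hm, mul_div_cancel_right₀ _ hden]

theorem leafPos_sameOrder_mem_UA (hT : T.IsTree) (hroot : T.IsVertex []) (hpos : ∀ u, 0 < f u)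
    {g : List Bool} (hlt : ∀ m, T.IsEdge m → f m < radius g m)
    {P : Fin r → MvPolynomial T.Idx ℂ} (hPhiPsi : T.PhiPsiId P) (hPsiPhi : T.PsiPhiId P) :
    let q : Fin r → ℂ := fun i => leafPos f T [] 1 0 i
    q ∈ ConfigSpace r ∧ SameOrder T q ∧ q ∈ T.UA P := by
  intro q
  have hx : ∀ {m l s}, T.subtreeAt m = some (node l s) → xval q (node l s) = pathProd f [] m :=
    fun h => (xAt_of_subtreeAt h).symm.trans (xAt_leafPos hT.1 ⟨_, _, h⟩)
  have hratio : ∀ m, T.IsEdge m → ‖T.xAt q m‖ ≤ radius g m * ‖T.xAt q m.dropLast‖ := by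
    intro m hm
    rw [xAt_leafPos_eq_mul hT.1 hm, norm_mul, Complex.norm_real, Real.norm_of_nonneg (hpos m).le]
    exact mul_le_mul_of_nonneg_right (hlt m hm).le (norm_nonneg _)
  have hsep : ∀ m l s, T.subtreeAt m = some (node l s) →
      normSum q l + normSum q s < ‖xval q (node l s)‖ := fun m l s h =>
    normSum_add_lt_norm_xval hratio h (by
      rw [xAt_of_subtreeAt h, hx h]; exact_mod_cast (pathProd_pos hpos m []).ne')
  have hconf := mem_configSpace_of_normSum_lt hT hsep
  refine ⟨hconf, sameOrder_of_normSum_lt_re hT fun m l s h => ?_,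
    mem_UA_of_psi_mem_cutRegion hPhiPsi (fun e => ?_) (admissible_radius hT hPsiPhi g) hconf
      ⟨?_, fun e => ?_⟩⟩
  · have := hsep m l s h
    rw [hx h, Complex.norm_real, Real.norm_of_nonneg (pathProd_pos hpos m []).le] at this
    rwa [hx h, Complex.ofReal_re]
  · unfold radius; split_ifs <;> norm_num
  · obtain ⟨l, s, h⟩ := hroot
    show xval q T ∈ cutPlane
    rw [← xAt_of_subtreeAt (subtreeAt_nil T), xAt_leafPos hT.1 ⟨l, s, h⟩]
    simp [cutPlane, pathProd]
  · show T.zetaAt q e.1 ∈ cutPlane ∧ ‖T.zetaAt q e.1‖ < radius g e.1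
    rw [zetaAt_leafPos hT.1 hpos e.2, Complex.norm_real, Real.norm_of_nonneg (hpos _).le]
    exact ⟨Or.inl (hpos _), hlt _ e.2⟩

end RealPoint

theorem leafPos_congr {f₁ f₂ : List Bool → ℝ} {p₁ p₂ : List Bool}
    (h : ∀ u ≠ [], f₁ (p₁ ++ u) = f₂ (p₂ ++ u)) (t : PTree r) (X ρ : ℝ) :
    leafPos f₁ t p₁ X ρ = leafPos f₂ t p₂ X ρ := by
  induction t generalizing p₁ p₂ X ρ with
  | leaf _ => rfl
  | node l s ihl ihs =>
    have hc : ∀ b, ∀ u ≠ [], f₁ (p₁ ++ [b] ++ u) = f₂ (p₂ ++ [b] ++ u) := fun b u _ => by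
      simpa using h (b :: u) (by simp)
    funext i
    simp only [leafPos_node, h [false] (by simp), h [true] (by simp), ihl (hc false),
      ihs (hc true)]

theorem leafPos_congr_of_forall_eq {f₁ f₂ : List Bool → ℝ} {p : List Bool}
    (h : ∀ u, f₁ (p ++ u) = f₂ (p ++ u)) (t : PTree r) (X ρ : ℝ) :
    leafPos f₁ t p (f₁ p * X) ρ = leafPos f₂ t p (f₂ p * X) ρ := by
  rw [show f₁ p = f₂ p by simpa using h []]
  exact leafPos_congr (fun u _ => h u) t _ _

theorem replaceAt_nil (t s : PTree r) : t.replaceAt [] s = s := by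
  cases t <;> rfl

theorem leafPos_replaceAt {f₁ f₂ : List Bool → ℝ} {e : List Bool} {S S' : PTree r}
    (hlab : S'.leafLabels = S.leafLabels) (hagree : ∀ u, ¬ e <+: u → f₁ u = f₂ u)
    (hbase : ∀ X ρ, leafPos f₁ S e (f₁ e * X) ρ = leafPos f₂ S' e (f₂ e * X) ρ)
    {t : PTree r} {m p : List Bool} (h : t.subtreeAt m = some S) (hpm : p ++ m = e)
    (hm : m ≠ []) (X ρ : ℝ) : leafPos f₁ t p X ρ = leafPos f₂ (t.replaceAt m S') p X ρ := by
  induction t generalizing m p X ρ with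
  | leaf _ =>
    obtain ⟨b, m, rfl⟩ := List.exists_cons_of_ne_nil hm
    simp [subtreeAt] at h
  | node l s ihl ihs =>
    obtain ⟨b, m, rfl⟩ := List.exists_cons_of_ne_nil hm
    have hoff : ∀ u, f₁ (p ++ [!b] ++ u) = f₂ (p ++ [!b] ++ u) := by
      intro u
      refine hagree _ fun ⟨v, hv⟩ => ?_
      rw [← hpm] at hv
      cases b <;> simp at hv
    have hon : ∀ c : PTree r, c.subtreeAt m = some S →
        (m ≠ [] → ∀ X ρ, leafPos f₁ c (p ++ [b]) X ρ
          = leafPos f₂ (c.replaceAt m S') (p ++ [b]) X ρ) →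
        ∀ ρ, leafPos f₁ c (p ++ [b]) (f₁ (p ++ [b]) * X) ρ
          = leafPos f₂ (c.replaceAt m S') (p ++ [b]) (f₂ (p ++ [b]) * X) ρ := by
      intro c hc ih ρ
      rcases eq_or_ne m [] with rfl | hm'
      · obtain rfl : c = S := by simpa [subtreeAt_nil] using hc
        obtain rfl : p ++ [b] = e := by simpa using hpm
        rw [replaceAt_nil]
        exact hbase X ρ
      · rw [hagree (p ++ [b]) fun hpre => ?_]
        · exact ih hm' _ _
        · rw [← hpm] at hpre
          exact hm' (by simpa using hpre.length_le)
    funext i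
    cases b <;> simp only [Bool.not_false, Bool.not_true] at hoff
    · have hl : l.subtreeAt m = some S := h
      simp only [replaceAt, Bool.false_eq_true, if_false, leafPos_node,
        leafLabels_replaceAt hl hlab]
      split_ifs
      · exact congrFun (hon l hl (fun hm' => ihl hl (by simpa using hpm) hm') _) i
      · exact congrFun (leafPos_congr_of_forall_eq hoff s _ _) i
    · have hs : s.subtreeAt m = some S := h
      simp only [replaceAt, if_true, leafPos_node]
      split_ifs
      · exact congrFun (leafPos_congr_of_forall_eq hoff l _ _) i
      · exact congrFun (hon s hs (fun hm' => ihs hs (by simpa using hpm) hm') _) i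

section Rotation

variable (e₀ : List Bool) (δ : ℝ)

def weightsBefore (m : List Bool) : ℝ := if m = e₀ ++ [true] then 2/3 else δ

/-- In `A'`, the same point has `x_{A₂A₃}` at `e₀` and `x_{A₁A₂} = x_{e₀} - x_{A₂A₃}`, which is
`2/3` resp. `1/3` of the old `x_{e₀}`; this rescales the ratios at `e₀`, at `A₁A₂` and at the
roots of `A₁`, `A₂`. -/
def weightsAfter (m : List Bool) : ℝ :=
  if m = e₀ then 2/3 * δ
  else if m = e₀ ++ [false] then 1/2
  else if m = e₀ ++ [false, false] then 3 * δ
  else if m = e₀ ++ [false, true] then 2 * δ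
  else δ

theorem leafPos_rotate (A₁ A₂ A₃ : PTree r) (X ρ : ℝ) :
    leafPos (weightsBefore e₀ δ) (node A₁ (node A₂ A₃)) e₀ (weightsBefore e₀ δ e₀ * X) ρ
      = leafPos (weightsAfter e₀ δ) (node (node A₁ A₂) A₃) e₀ (weightsAfter e₀ δ e₀ * X) ρ := by
  obtain ⟨b, bl, br, brl, brr⟩ : weightsBefore e₀ δ e₀ = δ ∧ weightsBefore e₀ δ (e₀ ++ [false]) = δ
      ∧ weightsBefore e₀ δ (e₀ ++ [true]) = 2/3 ∧ weightsBefore e₀ δ (e₀ ++ [true, false]) = δ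
      ∧ weightsBefore e₀ δ (e₀ ++ [true, true]) = δ := by
    simp [weightsBefore]
  obtain ⟨a, al, ar, all, alr⟩ : weightsAfter e₀ δ e₀ = 2/3 * δ
      ∧ weightsAfter e₀ δ (e₀ ++ [false]) = 1/2 ∧ weightsAfter e₀ δ (e₀ ++ [true]) = δ
      ∧ weightsAfter e₀ δ (e₀ ++ [false, false]) = 3 * δ
      ∧ weightsAfter e₀ δ (e₀ ++ [false, true]) = 2 * δ := by
    simp [weightsAfter]
  funext i
  simp only [leafPos_node, leafLabels, List.mem_append, List.append_assoc, List.cons_append,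
    List.nil_append, b, bl, br, brl, brr, a, al, ar, all, alr]
  by_cases h₁ : i ∈ A₁.leafLabels
  · simp only [h₁, true_or, if_true]
    convert congrFun (leafPos_congr (fun u hu => ?_) A₁ _ _) i using 2
    · ring
    · ring
    · simp [weightsBefore, weightsAfter, hu]
  by_cases h₂ : i ∈ A₂.leafLabels
  · simp only [h₁, h₂, or_true, if_true, if_false]
    convert congrFun (leafPos_congr (fun u hu => ?_) A₂ _ _) i using 2
    · ring
    · ring
    · simp [weightsBefore, weightsAfter, hu]
  · simp only [h₁, h₂, or_false, if_false]
    convert congrFun (leafPos_congr (fun u hu => ?_) A₃ _ _) i using 2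
    · ring
    · simp [weightsBefore, weightsAfter, hu]

theorem weightsBefore_eq_weightsAfter {u : List Bool} (hu : ¬ e₀ <+: u) :
    weightsBefore e₀ δ u = weightsAfter e₀ δ u := by
  have h : ∀ v, u ≠ e₀ ++ v := fun v h => hu (h ▸ List.prefix_append _ _)
  have h0 : u ≠ e₀ := by simpa using h []
  simp [weightsBefore, weightsAfter, h, h0]

variable {δ}

theorem weightsBefore_pos (hδ : 0 < δ) (m : List Bool) : 0 < weightsBefore e₀ δ m := by
  unfold weightsBefore; split_ifs <;> norm_num [hδ]

theorem weightsAfter_pos (hδ : 0 < δ) (m : List Bool) : 0 < weightsAfter e₀ δ m := by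
  unfold weightsAfter; split_ifs <;> norm_num [hδ]

theorem weightsBefore_lt_radius (hδ : δ < 1/16) (m : List Bool) :
    weightsBefore e₀ δ m < radius (e₀ ++ [true]) m := by
  unfold weightsBefore radius; split_ifs <;> norm_num [hδ]

theorem weightsAfter_lt_radius (hδ : δ < 1/48) (m : List Bool) :
    weightsAfter e₀ δ m < radius (e₀ ++ [false]) m := by
  unfold radius
  by_cases hm : m = e₀ ++ [false]
  · subst hm
    norm_num [weightsAfter]
  · rw [if_neg hm]
    unfold weightsAfter
    split_ifs <;> linarith

end Rotation

end PTree

theorem stmt_14_general {r : ℕ} (A : PTree r) (hA : A.IsTree)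
    (e₀ : List Bool) (he₀ : A.IsEdge e₀)
    (A₁ A₂ A₃ : PTree r)
    (halpha : A.subtreeAt e₀ = some (.node A₁ (.node A₂ A₃)))
    (A' : PTree r) (hA' : A' = A.replaceAt e₀ (.node (.node A₁ A₂) A₃))
    (P : Fin r → MvPolynomial A.Idx ℂ)
    (hPhiPsi : A.PhiPsiId P) (hPsiPhi : A.PsiPhiId P)
    (P' : Fin r → MvPolynomial A'.Idx ℂ)
    (hPhiPsi' : A'.PhiPsiId P') (hPsiPhi' : A'.PsiPhiId P') :
    ∃ q : Fin r → ℂ,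
      (∀ i, (q i).im = 0) ∧ q ∈ ConfigSpace r ∧
      q ∈ A.UA P ∧ q ∈ A'.UA P' ∧ SameOrder A q := by
  subst hA'
  have hroot : A.IsVertex [] := PTree.IsVertex.of_append (b := e₀) he₀.2
  have hrot : (PTree.node (.node A₁ A₂) A₃).leafLabels
      = (PTree.node A₁ (.node A₂ A₃)).leafLabels := by
    simp [PTree.leafLabels]
  have hlab := PTree.leafLabels_replaceAt halpha hrot
  have hq := PTree.leafPos_replaceAt hrot (fun _ => PTree.weightsBefore_eq_weightsAfter e₀ (1/64))
    (PTree.leafPos_rotate e₀ (1/64) A₁ A₂ A₃) halpha (List.nil_append e₀) he₀.1 1 0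
  obtain ⟨hconf, horder, hU⟩ := PTree.leafPos_sameOrder_mem_UA hA hroot
    (PTree.weightsBefore_pos e₀ (δ := 1/64) (by norm_num))
    (fun m _ => PTree.weightsBefore_lt_radius e₀ (by norm_num) m)
    hPhiPsi hPsiPhi
  obtain ⟨-, -, hU'⟩ := PTree.leafPos_sameOrder_mem_UA ⟨hlab ▸ hA.1, hlab ▸ hA.2⟩
    (PTree.isVertex_nil_replaceAt hroot he₀.1 _)
    (PTree.weightsAfter_pos e₀ (δ := 1/64) (by norm_num))
    (fun m _ => PTree.weightsAfter_lt_radius e₀ (by norm_num) m)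
    hPhiPsi' hPsiPhi'
  refine ⟨_, fun i => Complex.ofReal_im _, hconf, hU, ?_, horder⟩
  rwa [hq]

/-- Let `r ≥ 3`, `A ∈ 𝒯_r`, and let `e₀ ∈ E(A)` be an edge of alpha-type, i.e.
the subtree of `A` at `e₀` has the form `A₁(A₂A₃)` (the right child of `d(e₀)`
is not a leaf); let `α_{e₀}A` be the tree obtained from `A` by the rotation at
`e₀`, replacing this subtree by `(A₁A₂)A₃`.  If `Φ_A` and `Φ_{α_{e₀}A}` are
the polynomial maps inverting `Ψ_A` and `Ψ_{α_{e₀}A}`, then there exists a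
point `q ∈ U_A ∩ U_{α_{e₀}A} ∩ X_r(ℝ)` whose order is the same as the order
of `A`. -/
theorem stmt_14 {r : ℕ} (hr : 3 ≤ r) (A : PTree r) (hA : A.IsTree)
    (e₀ : List Bool) (he₀ : A.IsEdge e₀)
    (A₁ A₂ A₃ : PTree r)
    (halpha : A.subtreeAt e₀ = some (.node A₁ (.node A₂ A₃)))
    (A' : PTree r) (hA' : A' = A.replaceAt e₀ (.node (.node A₁ A₂) A₃))
    (P : Fin r → MvPolynomial A.Idx ℂ)
    (hPhiPsi : A.PhiPsiId P) (hPsiPhi : A.PsiPhiId P)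
    (P' : Fin r → MvPolynomial A'.Idx ℂ)
    (hPhiPsi' : A'.PhiPsiId P') (hPsiPhi' : A'.PsiPhiId P') :
    ∃ q : Fin r → ℂ,
      (∀ i, (q i).im = 0) ∧ q ∈ ConfigSpace r ∧
      q ∈ A.UA P ∧ q ∈ A'.UA P' ∧ SameOrder A q :=
  stmt_14_general A hA e₀ he₀ A₁ A₂ A₃ halpha A' hA' P hPhiPsi hPsiPhi P' hPhiPsi' hPsiPhi'
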